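/- Let p be an odd prime, A, B, C nonzero integers, and (x, y, z) rational numbers with x ≠ 0 satisfying A·x^p + B·y^p + C·z^p = 0. Define X = -B·C·y·z / x² and Y = (-B·C)^((p-1)/2) · (B·y^p - C·z^p) / (2·x^p). Then Y² = X^p + A²·(B·C)^(p-1)/4. -/

import Mathlib

/-!
Put `u = B yᵖ` and `v = C zᵖ`. The curve relation says `A xᵖ = -(u + v)`, hence
`(u - v)² = (u + v)² - 4uv = A² x²ᵖ - 4uv`. Since `p` is odd, `Xᵖ = -(BC)ᵖ (yz)ᵖ / x²ᵖ = -(BC)ᵖ⁻¹ uv / x²ᵖ`,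
while `Y² = (BC)ᵖ⁻¹ (u - v)² / (4 x²ᵖ)`, and the two expressions differ by `A² (BC)ᵖ⁻¹ / 4`.
-/

lemma sq_neg_pow_half_pred {R : Type*} [Monoid R] [HasDistribNeg R] {p : ℕ} (hp : Odd p) (t : R) :
    ((-t) ^ ((p - 1) / 2)) ^ 2 = t ^ (p - 1) := by
  have hhalf : (p - 1) / 2 * 2 = p - 1 := by
    obtain ⟨n, rfl⟩ := hp
    omega
  rw [← pow_mul, hhalf, Even.neg_pow (Nat.Odd.sub_odd hp odd_one)]

lemma neg_div_sq_pow_of_odd {K : Type*} [Field K] {p : ℕ} (hp : Odd p) (s x : K) :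
    (-s / x ^ 2) ^ p = -s ^ p / (x ^ p) ^ 2 := by
  rw [div_pow, Odd.neg_pow hp, ← pow_mul, ← pow_mul, mul_comm]

theorem fermat_relation_to_hyperelliptic {K : Type*} [Field K] (h2 : (2 : K) ≠ 0) {p : ℕ}
    (hp : Odd p) {a b c x y z : K} (hx : x ≠ 0) (h : a * x ^ p + b * y ^ p + c * z ^ p = 0) :
    ((-b * c) ^ ((p - 1) / 2) * (b * y ^ p - c * z ^ p) / (2 * x ^ p)) ^ 2
      = (-b * c * y * z / x ^ 2) ^ p + a ^ 2 * (b * c) ^ (p - 1) / 4 := by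
  have h4 : (4 : K) ≠ 0 := by simpa [← sq, show (2 : K) ^ 2 = 4 by norm_num] using pow_ne_zero 2 h2
  have hneg : -b * c * y * z = -((b * c) * (y * z)) := by ring
  have hbc : (b * c) ^ p = (b * c) ^ (p - 1) * (b * c) := (pow_sub_one_mul hp.pos.ne' _).symm
  rw [hneg, neg_div_sq_pow_of_odd hp, mul_pow (b * c), hbc, mul_pow y, div_pow,
    mul_pow _ (b * y ^ p - c * z ^ p), neg_mul, sq_neg_pow_half_pred hp]
  field_simp
  linear_combination
    4 * (b * c) ^ (p - 1) * (b * y ^ p + c * z ^ p - a * x ^ p) * h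

theorem stmt_4_general (p : ℕ) (hodd : Odd p) (A B C : ℤ) (x y z : ℚ) (hx : x ≠ 0)
    (h : (A : ℚ) * x ^ p + (B : ℚ) * y ^ p + (C : ℚ) * z ^ p = 0)
    (X Y : ℚ) (hX : X = -(B : ℚ) * C * y * z / x ^ 2)
    (hY : Y = (-(B : ℚ) * C) ^ ((p - 1) / 2) * ((B : ℚ) * y ^ p - (C : ℚ) * z ^ p)
      / (2 * x ^ p)) :
    Y ^ 2 = X ^ p + (A : ℚ) ^ 2 * ((B : ℚ) * C) ^ (p - 1) / 4 := by
  subst hX hY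
  exact fermat_relation_to_hyperelliptic two_ne_zero hodd hx h

theorem stmt_4 (p : ℕ) (hp : p.Prime) (hodd : Odd p) (A B C : ℤ) (hA : A ≠ 0)
    (hB : B ≠ 0) (hC : C ≠ 0) (x y z : ℚ) (hx : x ≠ 0)
    (h : (A : ℚ) * x ^ p + (B : ℚ) * y ^ p + (C : ℚ) * z ^ p = 0)
    (X Y : ℚ) (hX : X = -(B : ℚ) * C * y * z / x ^ 2)
    (hY : Y = (-(B : ℚ) * C) ^ ((p - 1) / 2) * ((B : ℚ) * y ^ p - (C : ℚ) * z ^ p)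
      / (2 * x ^ p)) :
    Y ^ 2 = X ^ p + (A : ℚ) ^ 2 * ((B : ℚ) * C) ^ (p - 1) / 4 :=
  stmt_4_general p hodd A B C x y z hx h X Y hX hY
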